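/- arXiv:1209.5124 — 6 statements merged into one kernel-verified Lean document; each statement's English description precedes it below -/
import Mathlib

section
/- For C > 0 and nonnegative integers p, q, if a ∈ A_C with a ∈ t^p ℂ[[t]] and b ∈ A_C with b ∈ t^q ℂ[[t]], then ‖ab‖_C ≤ (p! q! / (p+q)!) · ‖a‖_C · ‖b‖_C. -/
open PowerSeries

/-- The norm `‖a‖_C = ∑_{j≥0} |a_j| C^j / j!` on formal power series. -/
noncomputable def pNorm (C : ℝ) (a : PowerSeries ℂ) : ℝ :=
  ∑' j : ℕ, ‖coeff j a‖ * C ^ j / (Nat.factorial j : ℝ)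

/-- Membership in `A_C`: the series `∑ |a_j| C^j / j!` converges. -/
def MemAC (C : ℝ) (a : PowerSeries ℂ) : Prop :=
  Summable fun j : ℕ => ‖coeff j a‖ * C ^ j / (Nat.factorial j : ℝ)

/-!
Write `K = p! q! / (p+q)!`. Since `1 / binom(i+j, i) = i! j! / (i+j)!` and the binomial coefficient
is monotone in both entries, `1 / (i+j)! ≤ K / (i! j!)` whenever `p ≤ i` and `q ≤ j`, which are the
only pairs contributing to the Cauchy product. Hence the `n`-th weighted coefficient of `a b` is at
most `K` times the `n`-th term of the Cauchy product of the weighted coefficient sequences of `a`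
and `b`, and summing over `n` gives the bound.
-/

open Nat Finset

theorem Nat.choose_add_le_choose_add {p q i j : ℕ} (hi : p ≤ i) (hj : q ≤ j) :
    (p + q).choose p ≤ (i + j).choose i :=
  calc (p + q).choose p ≤ (p + j).choose p := choose_le_choose p (by omega)
    _ = (j + p).choose j := by rw [add_comm, choose_symm_add]
    _ ≤ (j + i).choose j := choose_le_choose j (by omega)
    _ = (i + j).choose i := by rw [add_comm, choose_symm_add]

theorem factorial_mul_factorial_div_factorial_add_le {p q i j : ℕ} (hi : p ≤ i) (hj : q ≤ j) :
    (i ! * j ! : ℝ) / (i + j)! ≤ p ! * q ! / (p + q)! := by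
  rw [← inv_div ((i + j)! : ℝ), ← inv_div ((p + q)! : ℝ), ← cast_add_choose, ← cast_add_choose]
  exact inv_anti₀ (mod_cast choose_pos (by omega)) (mod_cast Nat.choose_add_le_choose_add hi hj)

theorem mul_pow_div_factorial_add_le {C x y : ℝ} (hC : 0 ≤ C) (hx : 0 ≤ x) (hy : 0 ≤ y)
    {p q i j : ℕ} (hi : p ≤ i) (hj : q ≤ j) :
    x * y * C ^ (i + j) / (i + j)! ≤
      (p ! * q ! / (p + q)! : ℝ) * (x * C ^ i / i ! * (y * C ^ j / j !)) := by
  have hfac := factorial_mul_factorial_div_factorial_add_le hi hj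
  calc x * y * C ^ (i + j) / (i + j)!
      = (i ! * j ! : ℝ) / (i + j)! * (x * C ^ i / i ! * (y * C ^ j / j !)) := by
        field_simp; ring
    _ ≤ _ := by gcongr

theorem norm_coeff_mul_mul_pow_div_factorial_le {C : ℝ} (hC : 0 ≤ C) {p q : ℕ}
    {a b : PowerSeries ℂ} (hap : ∀ j < p, coeff j a = 0) (hbq : ∀ j < q, coeff j b = 0) (n : ℕ) :
    ‖coeff n (a * b)‖ * C ^ n / n ! ≤ (p ! * q ! / (p + q)! : ℝ) *
      ∑ kl ∈ antidiagonal n,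
        ‖coeff kl.1 a‖ * C ^ kl.1 / kl.1 ! * (‖coeff kl.2 b‖ * C ^ kl.2 / kl.2 !) := by
  have hnorm : ‖coeff n (a * b)‖ ≤ ∑ kl ∈ antidiagonal n, ‖coeff kl.1 a‖ * ‖coeff kl.2 b‖ := by
    rw [coeff_mul]
    exact (norm_sum_le _ _).trans_eq (sum_congr rfl fun _ _ => norm_mul _ _)
  calc ‖coeff n (a * b)‖ * C ^ n / n !
      ≤ ∑ kl ∈ antidiagonal n, ‖coeff kl.1 a‖ * ‖coeff kl.2 b‖ * C ^ n / n ! := by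
        rw [← sum_div, ← sum_mul]; gcongr
    _ ≤ _ := by
        rw [mul_sum]
        refine sum_le_sum fun ⟨i, j⟩ hij => ?_
        obtain rfl : i + j = n := mem_antidiagonal.mp hij
        rcases lt_or_ge i p with hi | hi
        · rw [hap i hi, norm_zero, zero_mul, zero_mul, zero_div]; positivity
        rcases lt_or_ge j q with hj | hj
        · rw [hbq j hj, norm_zero, mul_zero, zero_mul, zero_div]; positivity
        exact mul_pow_div_factorial_add_le hC (norm_nonneg _) (norm_nonneg _) hi hj

theorem tsum_le_mul_tsum_mul_tsum_of_le_sum_antidiagonal {f F G : ℕ → ℝ} {K : ℝ}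
    (hf : ∀ n, 0 ≤ f n) (hF : ∀ n, 0 ≤ F n) (hG : ∀ n, 0 ≤ G n)
    (hFs : Summable F) (hGs : Summable G)
    (hle : ∀ n, f n ≤ K * ∑ kl ∈ antidiagonal n, F kl.1 * G kl.2) :
    ∑' n, f n ≤ K * ((∑' n, F n) * ∑' n, G n) := by
  have hprod : Summable fun x : ℕ × ℕ => F x.1 * G x.2 := hFs.mul_of_nonneg hGs hF hG
  have hcauchy := (summable_sum_mul_antidiagonal_of_summable_mul hprod).mul_left K
  rw [hFs.tsum_mul_tsum_eq_tsum_sum_antidiagonal hGs hprod, ← tsum_mul_left]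
  exact (hcauchy.of_nonneg_of_le hf hle).tsum_le_tsum hle hcauchy

/-- If `a ∈ A_C ∩ t^p ℂ[[t]]` and `b ∈ A_C ∩ t^q ℂ[[t]]`, then
`‖a * b‖_C ≤ (p! q! / (p+q)!) ‖a‖_C ‖b‖_C`. -/
theorem stmt_1 (C : ℝ) (hC : 0 < C) (p q : ℕ) (a b : PowerSeries ℂ)
    (ha : MemAC C a) (hb : MemAC C b)
    (hap : ∀ j < p, coeff j a = 0) (hbq : ∀ j < q, coeff j b = 0) :
    pNorm C (a * b) ≤
      ((Nat.factorial p : ℝ) * (Nat.factorial q : ℝ) / (Nat.factorial (p + q) : ℝ)) *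
        (pNorm C a * pNorm C b) :=
  tsum_le_mul_tsum_mul_tsum_of_le_sum_antidiagonal (fun _ => by positivity)
    (fun _ => by positivity) (fun _ => by positivity) ha hb
    (norm_coeff_mul_mul_pow_div_factorial_le hC.le hap hbq)
end

section
/- For C > 0, if a ∈ A_C satisfies a ∈ t·ℂ[[t]] (i.e., its constant coefficient vanishes), then 1 − a is invertible in A_C. -/
/-! The inverse of `1 - a` is the geometric series `∑ aⁿ`; since `aⁿ` has order at least `n`, each
coefficient of it is a finite sum. Multiplying a series of order `≥ n` by one of order `≥ 1` gains a
factor `1 / (n + 1)` in `‖·‖_C`, because `(n + 1) i! k! ≤ (i + k)!` whenever `i ≥ n` and `k ≥ 1`.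
Hence `‖aⁿ‖_C ≤ ‖a‖_Cⁿ / n!`, which is summable in `n`, and this dominates the weighted
coefficients of the inverse. -/

open PowerSeries

open Finset
open scoped Nat

theorem Nat.succ_mul_factorial_mul_factorial_le {n i k : ℕ} (hn : n ≤ i) (hk : 1 ≤ k) :
    (n + 1) * (i ! * k !) ≤ (i + k)! := by
  rw [← Nat.add_choose_mul_factorial_mul_factorial, mul_assoc, Nat.add_comm i k]
  refine Nat.mul_le_mul_right _ ?_
  calc n + 1 ≤ (i + 1).choose i := by rw [Nat.choose_succ_self_right]; omega
    _ ≤ (k + i).choose i := Nat.choose_le_choose _ (by omega)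
    _ = (k + i).choose k := Nat.choose_symm_add.symm

theorem PowerSeries.coeff_inv_one_sub {k : Type*} [Field k] {a : k⟦X⟧} (ha : X ∣ a) (j : ℕ) :
    coeff j (1 - a)⁻¹ = ∑ n ∈ range (j + 1), coeff j (a ^ n) := by
  have hunit : constantCoeff (1 - a) ≠ 0 := by
    simp [X_dvd_iff.mp ha]
  have hgeom : (1 - a)⁻¹ = ∑ n ∈ range (j + 1), a ^ n + a ^ (j + 1) * (1 - a)⁻¹ := by
    linear_combination (-(1 - a)⁻¹) * mul_neg_geom_sum a (j + 1) +
      (∑ n ∈ range (j + 1), a ^ n) * PowerSeries.inv_mul_cancel _ hunit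
  have htail : coeff j (a ^ (j + 1) * (1 - a)⁻¹) = 0 :=
    X_pow_dvd_iff.mp ((pow_dvd_pow_of_dvd ha _).mul_right _) j j.lt_succ_self
  rw [hgeom, map_add, htail, add_zero, map_sum]

noncomputable def acTerm (C : ℝ) (a : ℂ⟦X⟧) (j : ℕ) : ℝ := ‖coeff j a‖ * C ^ j / j !

noncomputable def normAC (C : ℝ) (a : ℂ⟦X⟧) : ℝ := ∑' j, acTerm C a j

section

variable {C : ℝ}

theorem acTerm_nonneg (hC : 0 ≤ C) (a : ℂ⟦X⟧) (j : ℕ) : 0 ≤ acTerm C a j := by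
  unfold acTerm; positivity

theorem normAC_nonneg (hC : 0 ≤ C) (a : ℂ⟦X⟧) : 0 ≤ normAC C a :=
  tsum_nonneg (acTerm_nonneg hC a)

theorem hasSum_acTerm_one : HasSum (acTerm C 1) 1 := by
  convert hasSum_ite_eq 0 (1 : ℝ) using 2 with j
  rcases eq_or_ne j 0 with rfl | hj <;> simp [acTerm, coeff_one, *]

theorem acTerm_mul_le (hC : 0 ≤ C) {n : ℕ} {c a : ℂ⟦X⟧} (hc : X ^ n ∣ c) (ha : X ∣ a)
    (j : ℕ) :
    acTerm C (c * a) j ≤ (∑ ik ∈ antidiagonal j, acTerm C c ik.1 * acTerm C a ik.2) / (n + 1) := by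
  have hterm : ∀ i k : ℕ, ‖coeff i c‖ * ‖coeff k a‖ * C ^ (i + k) / (i + k)! ≤
      acTerm C c i * acTerm C a k / (n + 1) := by
    intro i k
    by_cases hcoeff : coeff i c = 0 ∨ coeff k a = 0
    · rcases hcoeff with h | h <;>
        simp only [h, norm_zero, zero_mul, mul_zero, zero_div] <;>
        exact div_nonneg (mul_nonneg (acTerm_nonneg hC c i) (acTerm_nonneg hC a k)) (by positivity)
    push Not at hcoeff
    have hni : n ≤ i := not_lt.mp fun h => hcoeff.1 (X_pow_dvd_iff.mp hc i h)
    have hk : 1 ≤ k := Nat.one_le_iff_ne_zero.mpr fun h => hcoeff.2 <| by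
      rw [h, coeff_zero_eq_constantCoeff_apply, X_dvd_iff.mp ha]
    have hfact : ((n + 1) * (i ! * k !) : ℝ) ≤ (i + k)! := by
      exact_mod_cast Nat.succ_mul_factorial_mul_factorial_le hni hk
    calc ‖coeff i c‖ * ‖coeff k a‖ * C ^ (i + k) / (i + k)!
        ≤ ‖coeff i c‖ * ‖coeff k a‖ * C ^ (i + k) / ((n + 1) * (i ! * k !)) := by
          gcongr
      _ = acTerm C c i * acTerm C a k / (n + 1) := by
          simp only [acTerm, pow_add]; field_simp
  calc acTerm C (c * a) j
      ≤ (∑ ik ∈ antidiagonal j, ‖coeff ik.1 c‖ * ‖coeff ik.2 a‖) * C ^ j / j ! := by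
        unfold acTerm
        rw [coeff_mul]
        gcongr
        exact (norm_sum_le _ _).trans_eq (by simp only [norm_mul])
    _ = ∑ ik ∈ antidiagonal j,
          ‖coeff ik.1 c‖ * ‖coeff ik.2 a‖ * C ^ (ik.1 + ik.2) / (ik.1 + ik.2)! := by
        rw [sum_mul, sum_div]
        refine sum_congr rfl fun ik hik => ?_
        rw [mem_antidiagonal.mp hik]
    _ ≤ _ := by
        rw [sum_div]
        exact sum_le_sum fun ik _ => hterm ik.1 ik.2

theorem MemAC.mul_and_normAC_mul_le (hC : 0 ≤ C) {n : ℕ} {c a : ℂ⟦X⟧} (hc : MemAC C c)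
    (ha : MemAC C a) (hcn : X ^ n ∣ c) (ha0 : X ∣ a) :
    MemAC C (c * a) ∧ normAC C (c * a) ≤ normAC C c * normAC C a / (n + 1) := by
  have hprod : Summable fun p : ℕ × ℕ => acTerm C c p.1 * acTerm C a p.2 :=
    Summable.mul_of_nonneg hc ha (acTerm_nonneg hC c) (acTerm_nonneg hC a)
  have hcauchy := (summable_sum_mul_antidiagonal_of_summable_mul hprod).div_const (n + 1 : ℝ)
  have hmem : MemAC C (c * a) :=
    hcauchy.of_nonneg_of_le (acTerm_nonneg hC _) (acTerm_mul_le hC hcn ha0)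
  refine ⟨hmem, ?_⟩
  calc normAC C (c * a)
        ≤ ∑' j, (∑ ik ∈ antidiagonal j, acTerm C c ik.1 * acTerm C a ik.2) / (n + 1) :=
        hmem.tsum_le_tsum (acTerm_mul_le hC hcn ha0) hcauchy
    _ = normAC C c * normAC C a / (n + 1) := by
        rw [tsum_div_const, normAC, normAC, Summable.tsum_mul_tsum_eq_tsum_sum_antidiagonal
          (f := acTerm C c) (g := acTerm C a) hc ha hprod]

theorem MemAC.pow_and_normAC_pow_le (hC : 0 ≤ C) {a : ℂ⟦X⟧} (ha : MemAC C a) (ha0 : X ∣ a)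
    (n : ℕ) :
    MemAC C (a ^ n) ∧ normAC C (a ^ n) ≤ normAC C a ^ n / n ! := by
  induction n with
  | zero => simpa [normAC] using ⟨hasSum_acTerm_one.summable, hasSum_acTerm_one.tsum_eq.le⟩
  | succ n ih =>
    obtain ⟨hmem, hle⟩ :=
      MemAC.mul_and_normAC_mul_le hC ih.1 ha (pow_dvd_pow_of_dvd ha0 n) ha0
    refine ⟨pow_succ a n ▸ hmem, ?_⟩
    calc normAC C (a ^ (n + 1)) ≤ normAC C (a ^ n) * normAC C a / (n + 1) := pow_succ a n ▸ hle
      _ ≤ normAC C a ^ n / n ! * normAC C a / (n + 1) := by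
        gcongr
        · exact normAC_nonneg hC a
        · exact ih.2
      _ = normAC C a ^ (n + 1) / (n + 1)! := by
        rw [Nat.factorial_succ, pow_succ]; push_cast; field_simp

theorem MemAC.of_norm_coeff_le_tsum (hC : 0 ≤ C) {f : ℕ → ℂ⟦X⟧} {b : ℂ⟦X⟧}
    (hf : ∀ n, MemAC C (f n)) (hs : Summable fun n => normAC C (f n))
    (hb : ∀ j, ‖coeff j b‖ ≤ ∑' n, ‖coeff j (f n)‖) : MemAC C b := by
  have hprod : Summable fun p : ℕ × ℕ => acTerm C (f p.1) p.2 :=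
    (summable_prod_of_nonneg fun p => acTerm_nonneg hC _ _).mpr ⟨hf, hs⟩
  have hcols : Summable fun j => ∑' n, acTerm C (f n) j :=
    ((summable_prod_of_nonneg fun p => acTerm_nonneg hC _ _).mp hprod.prod_symm).2
  refine hcols.of_nonneg_of_le (acTerm_nonneg hC b) fun j => ?_
  calc acTerm C b j ≤ (∑' n, ‖coeff j (f n)‖) * C ^ j / j ! := by
        unfold acTerm; gcongr; exact hb j
    _ = ∑' n, acTerm C (f n) j := by
        rw [← tsum_mul_right, ← tsum_div_const]; rfl

end

/-- If `a ∈ A_C` has vanishing constant coefficient, then `1 - a` is invertible in `A_C`. -/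
theorem stmt_2 (C : ℝ) (hC : 0 < C) (a : PowerSeries ℂ)
    (ha : MemAC C a) (h0 : coeff 0 a = 0) :
    ∃ b : PowerSeries ℂ, MemAC C b ∧ (1 - a) * b = 1 ∧ b * (1 - a) = 1 := by
  have hX : X ∣ a := X_dvd_iff.mpr (by rwa [← coeff_zero_eq_constantCoeff_apply])
  have hunit : constantCoeff (1 - a) ≠ 0 := by simp [X_dvd_iff.mp hX]
  refine ⟨(1 - a)⁻¹, ?_, PowerSeries.mul_inv_cancel _ hunit, PowerSeries.inv_mul_cancel _ hunit⟩
  have hpow := MemAC.pow_and_normAC_pow_le hC.le ha hX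
  have hsum : Summable fun n => normAC C (a ^ n) :=
    (Real.summable_pow_div_factorial (normAC C a)).of_nonneg_of_le
      (fun n => normAC_nonneg hC.le _) fun n => (hpow n).2
  refine MemAC.of_norm_coeff_le_tsum hC.le (fun n => (hpow n).1) hsum fun j => ?_
  have hvanish : ∀ n ∉ range (j + 1), ‖coeff j (a ^ n)‖ = 0 := fun n hn => by
    rw [X_pow_dvd_iff.mp (pow_dvd_pow_of_dvd hX n) j (by simpa using hn), norm_zero]
  rw [coeff_inv_one_sub hX, tsum_eq_sum hvanish]
  exact norm_sum_le _ _
end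

section
/- If a ∈ A_C satisfies a ∈ t·ℂ[[t]], then for every n ≥ 1, ‖a^n‖_C ≤ ‖a‖_C^n / n!. -/
open PowerSeries

/-!
Write `‖a‖_C = ∑ⱼ wⱼ(a)` with `wⱼ(a) = |aⱼ| Cʲ / j!`. If `a` has no constant term and `b`
vanishes to order `n`, every nonzero term `a_k b_l` of the Cauchy product has `k ≥ 1` and
`l ≥ n`, so `(k + l)! ≥ (n + 1) k! l!`; hence `w(ab) ≤ (w(a) ⋆ w(b)) / (n + 1)` termwise, and
summing gives `‖ab‖_C ≤ ‖a‖_C ‖b‖_C / (n + 1)`. Applying this with `b = aⁿ`, which vanishes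
to order `n`, the bound follows by induction on `n`.
-/

open scoped Nat

theorem Nat.succ_mul_factorial_mul_factorial_le_factorial_add {n k l : ℕ} (hk : 1 ≤ k)
    (hl : n ≤ l) : (n + 1) * (k ! * l !) ≤ (k + l)! := by
  have hchoose : n + 1 ≤ (k + l).choose l :=
    calc n + 1 ≤ (l + 1).choose l := by rw [Nat.choose_succ_self_right]; omega
      _ ≤ (k + l).choose l := Nat.choose_le_choose l (by omega)
  calc (n + 1) * (k ! * l !) ≤ (k + l).choose l * (k ! * l !) := Nat.mul_le_mul_right _ hchoose
    _ = (k + l)! := by rw [← mul_assoc, Nat.add_choose_mul_factorial_mul_factorial]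

namespace PowerSeries

open Finset.HasAntidiagonal

theorem coeff_pow_eq_zero_of_lt {R : Type*} [Semiring R] {f : PowerSeries R} (hf : coeff 0 f = 0)
    {l n : ℕ} (hl : l < n) : coeff l (f ^ n) = 0 :=
  coeff_of_lt_order l ((Nat.cast_lt.mpr hl).trans_le
    (le_order_pow_of_constantCoeff_eq_zero n (by simpa using hf)))

variable {C : ℝ} {a b : PowerSeries ℂ} {n : ℕ}

noncomputable def pNormTerm (C : ℝ) (a : PowerSeries ℂ) (j : ℕ) : ℝ :=
  ‖coeff j a‖ * C ^ j / (j ! : ℝ)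

lemma pNormTerm_nonneg (hC : 0 ≤ C) (a : PowerSeries ℂ) (j : ℕ) : 0 ≤ pNormTerm C a j := by
  unfold pNormTerm; positivity

lemma norm_coeff_mul_norm_coeff_le (hC : 0 ≤ C) (ha : coeff 0 a = 0)
    (hb : ∀ l < n, coeff l b = 0) (k l : ℕ) :
    ‖coeff k a‖ * ‖coeff l b‖ * C ^ (k + l) / ((k + l)! : ℝ) ≤
      pNormTerm C a k * pNormTerm C b l / (n + 1) := by
  have hrhs : 0 ≤ pNormTerm C a k * pNormTerm C b l / (n + 1) := by
    have := pNormTerm_nonneg hC a k; have := pNormTerm_nonneg hC b l; positivity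
  rcases Nat.eq_zero_or_pos k with rfl | hk
  · simpa [ha] using hrhs
  rcases Nat.lt_or_ge l n with hl | hl
  · simpa [hb l hl] using hrhs
  have hfac : ((n + 1 : ℕ) * (k ! * l !) : ℝ) ≤ ((k + l)! : ℝ) := by
    exact_mod_cast Nat.succ_mul_factorial_mul_factorial_le_factorial_add hk hl
  calc ‖coeff k a‖ * ‖coeff l b‖ * C ^ (k + l) / ((k + l)! : ℝ)
      ≤ ‖coeff k a‖ * ‖coeff l b‖ * C ^ (k + l) / ((n + 1 : ℕ) * (k ! * l !) : ℝ) := by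
        gcongr
    _ = pNormTerm C a k * pNormTerm C b l / (n + 1) := by
        unfold pNormTerm
        push_cast
        field_simp
        ring

lemma pNormTerm_mul_le (hC : 0 ≤ C) (ha : coeff 0 a = 0) (hb : ∀ l < n, coeff l b = 0)
    (j : ℕ) :
    pNormTerm C (a * b) j ≤
      (∑ kl ∈ antidiagonal j, pNormTerm C a kl.1 * pNormTerm C b kl.2) / (n + 1) := by
  calc pNormTerm C (a * b) j
      ≤ (∑ kl ∈ antidiagonal j, ‖coeff kl.1 a‖ * ‖coeff kl.2 b‖) * C ^ j / (j ! : ℝ) := by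
        unfold pNormTerm
        gcongr
        rw [coeff_mul]
        exact (norm_sum_le _ _).trans_eq (Finset.sum_congr rfl fun kl _ => norm_mul _ _)
    _ = ∑ kl ∈ antidiagonal j,
          ‖coeff kl.1 a‖ * ‖coeff kl.2 b‖ * C ^ (kl.1 + kl.2) / ((kl.1 + kl.2)! : ℝ) := by
        rw [Finset.sum_mul, Finset.sum_div]
        refine Finset.sum_congr rfl fun kl hkl => ?_
        rw [mem_antidiagonal.mp hkl]
    _ ≤ ∑ kl ∈ antidiagonal j, pNormTerm C a kl.1 * pNormTerm C b kl.2 / (n + 1) :=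
        Finset.sum_le_sum fun kl _ => norm_coeff_mul_norm_coeff_le hC ha hb kl.1 kl.2
    _ = _ := (Finset.sum_div _ _ _).symm

theorem memAC_mul_and_pNorm_mul_le (hC : 0 ≤ C) (ha : MemAC C a) (hb : MemAC C b)
    (ha0 : coeff 0 a = 0) (hb0 : ∀ l < n, coeff l b = 0) :
    MemAC C (a * b) ∧ pNorm C (a * b) ≤ pNorm C a * pNorm C b / (n + 1) := by
  have hab : Summable fun kl : ℕ × ℕ => pNormTerm C a kl.1 * pNormTerm C b kl.2 :=
    ha.mul_of_nonneg hb (fun j => pNormTerm_nonneg hC a j)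
      (fun j => pNormTerm_nonneg hC b j)
  have hconv := summable_sum_mul_antidiagonal_of_summable_mul hab
  have hbound := pNormTerm_mul_le hC ha0 hb0
  have hmem : MemAC C (a * b) :=
    (hconv.div_const _).of_nonneg_of_le (pNormTerm_nonneg hC _) hbound
  have hcauchy : pNorm C a * pNorm C b =
      ∑' j, ∑ kl ∈ antidiagonal j, pNormTerm C a kl.1 * pNormTerm C b kl.2 :=
    ha.tsum_mul_tsum_eq_tsum_sum_antidiagonal hb hab
  refine ⟨hmem, ?_⟩
  calc pNorm C (a * b)
      ≤ ∑' j, (∑ kl ∈ antidiagonal j, pNormTerm C a kl.1 * pNormTerm C b kl.2) / (n + 1) :=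
        hmem.tsum_le_tsum hbound (hconv.div_const _)
    _ = pNorm C a * pNorm C b / (n + 1) := by
        rw [tsum_div_const, ← hcauchy]

end PowerSeries

/-- If `a ∈ A_C` has vanishing constant coefficient, then for every `n ≥ 1`,
`‖a^n‖_C ≤ ‖a‖_C^n / n!`. -/
theorem stmt_3 (C : ℝ) (hC : 0 < C) (a : PowerSeries ℂ)
    (ha : MemAC C a) (h0 : coeff 0 a = 0) :
    ∀ n : ℕ, 1 ≤ n →
      MemAC C (a ^ n) ∧ pNorm C (a ^ n) ≤ (pNorm C a) ^ n / (Nat.factorial n : ℝ) := by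
  have hnorm : 0 ≤ pNorm C a := tsum_nonneg fun j => pNormTerm_nonneg hC.le a j
  intro n hn
  induction n, hn using Nat.le_induction with
  | base => simpa using ha
  | succ n _ ih =>
    obtain ⟨hmem, hle⟩ := memAC_mul_and_pNorm_mul_le hC.le ha ih.1 h0
      fun l hl => coeff_pow_eq_zero_of_lt h0 hl
    rw [pow_succ']
    refine ⟨hmem, hle.trans ?_⟩
    calc pNorm C a * pNorm C (a ^ n) / (n + 1)
        ≤ pNorm C a * (pNorm C a ^ n / n !) / (n + 1) := by gcongr; exact ih.2
      _ = pNorm C a ^ (n + 1) / (n + 1)! := by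
        rw [Nat.factorial_succ, pow_succ']; push_cast; field_simp
end

section
/- Let A = ⋃_{C>0} A_C ⊂ ℂ[[t]]. Then every nonzero element a ∈ A can be written as a = u t^ℓ for some integer ℓ ≥ 0 and some element u that is invertible in A. In particular A is a discrete valuation ring. -/
/-!
`A` is the ring of series of factorial growth: `a ∈ A` iff `‖a_j‖ ≤ K R^j j!` for some `K, R`.
Both operations needed are compatible with such bounds. Dividing by `t^ℓ` costs a factor
`2^(k+ℓ)`, since `(k+ℓ)! ≤ 2^(k+ℓ) k! ℓ!`. For the inverse `v` of a unit `u`, the recursion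
`u₀ vₙ = -∑_{i ≥ 1} uᵢ v_{n-i}` and `i! (n-i)! ≤ n!` propagate `‖vₙ‖ ≤ ‖v₀‖ Sⁿ n!` by strong
induction, once `R / S` is small compared with `‖u₀‖ / K`.
-/

open PowerSeries

/-- Membership in `A = ⋃_{C>0} A_C`. -/
def MemA (a : PowerSeries ℂ) : Prop := ∃ C : ℝ, 0 < C ∧ MemAC C a

open Finset
open scoped Nat

lemma memA_iff_exists_norm_coeff_le {a : PowerSeries ℂ} :
    MemA a ↔ ∃ K R : ℝ, 0 ≤ K ∧ 0 < R ∧ ∀ j, ‖coeff j a‖ ≤ K * R ^ j * j ! := by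
  constructor
  · rintro ⟨C, hC, hsum⟩
    refine ⟨∑' i, ‖coeff i a‖ * C ^ i / i !, C⁻¹, tsum_nonneg fun i => by positivity,
      inv_pos.2 hC, fun j => ?_⟩
    have hj := hsum.le_tsum j fun i _ => by positivity
    rw [div_le_iff₀ (by positivity)] at hj
    calc ‖coeff j a‖ = ‖coeff j a‖ * C ^ j * C⁻¹ ^ j := by
          rw [mul_assoc, ← mul_pow, mul_inv_cancel₀ hC.ne', one_pow, mul_one]
      _ ≤ (∑' i, ‖coeff i a‖ * C ^ i / i !) * j ! * C⁻¹ ^ j := by gcongr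
      _ = _ := by ring
  · rintro ⟨K, R, -, hR, hbound⟩
    refine ⟨(2 * R)⁻¹, by positivity, ?_⟩
    refine (summable_geometric_two.mul_left K).of_nonneg_of_le (fun j => by positivity)
      fun j => ?_
    calc ‖coeff j a‖ * (2 * R)⁻¹ ^ j / j ! ≤ K * R ^ j * j ! * (2 * R)⁻¹ ^ j / j ! := by
          gcongr; exact hbound j
      _ = K * (1 / 2) ^ j := by
        have hhalf : R * (2 * R)⁻¹ = 1 / 2 := by field_simp
        rw [← hhalf, mul_pow]; field_simp

lemma MemA.of_X_pow_mul {u : PowerSeries ℂ} (ℓ : ℕ) (h : MemA (X ^ ℓ * u)) : MemA u := by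
  obtain ⟨K, R, hK, hR, hbound⟩ := memA_iff_exists_norm_coeff_le.1 h
  refine memA_iff_exists_norm_coeff_le.2
    ⟨K * (2 * R) ^ ℓ * ℓ !, 2 * R, by positivity, by positivity, fun k => ?_⟩
  have hfac : ((k + ℓ)! : ℝ) ≤ 2 ^ (k + ℓ) * k ! * ℓ ! := by
    have : (k + ℓ)! ≤ 2 ^ (k + ℓ) * k ! * ℓ ! := calc
      (k + ℓ)! = (k + ℓ).choose ℓ * k ! * ℓ ! :=
        (Nat.add_choose_mul_factorial_mul_factorial k ℓ).symm
      _ ≤ 2 ^ (k + ℓ) * k ! * ℓ ! := by gcongr; exact Nat.choose_le_two_pow _ _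
    exact_mod_cast this
  calc ‖coeff k u‖ = ‖coeff (k + ℓ) (X ^ ℓ * u)‖ := by rw [coeff_X_pow_mul]
    _ ≤ K * R ^ (k + ℓ) * (k + ℓ)! := hbound _
    _ ≤ K * R ^ (k + ℓ) * (2 ^ (k + ℓ) * k ! * ℓ !) := by gcongr
    _ = K * (2 * R) ^ ℓ * ℓ ! * (2 * R) ^ k * k ! := by ring

lemma norm_constantCoeff_mul_norm_coeff_succ_le {u v : PowerSeries ℂ} (h : u * v = 1) (n : ℕ) :
    ‖constantCoeff u‖ * ‖coeff (n + 1) v‖ ≤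
      ∑ i ∈ range (n + 1), ‖coeff (i + 1) u‖ * ‖coeff (n - i) v‖ := by
  have hco : coeff (n + 1) (u * v) = 0 := by rw [h, coeff_one]; simp
  rw [coeff_mul, Nat.sum_antidiagonal_eq_sum_range_succ_mk, sum_range_succ'] at hco
  simp only [Nat.add_sub_add_right, Nat.sub_zero] at hco
  calc ‖constantCoeff u‖ * ‖coeff (n + 1) v‖
      = ‖∑ i ∈ range (n + 1), coeff (i + 1) u * coeff (n - i) v‖ := by
        rw [← norm_mul, ← coeff_zero_eq_constantCoeff_apply, eq_neg_of_add_eq_zero_right hco,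
          norm_neg]
    _ ≤ ∑ i ∈ range (n + 1), ‖coeff (i + 1) u * coeff (n - i) v‖ := norm_sum_le _ _
    _ = _ := by simp only [norm_mul]

lemma le_mul_pow_mul_factorial_of_mul_le_sum {a b : ℕ → ℝ} {r K q S : ℝ} (hK : 0 ≤ K)
    (hq : 0 ≤ q) (hq2 : q ≤ 1 / 2) (hKq : 2 * K * q ≤ r) (hr : 0 < r) (hS : 0 ≤ S)
    (ha : ∀ i, a i ≤ K * (q * S) ^ i * i !) (hb : ∀ n, 0 ≤ b n)
    (hrec : ∀ n, r * b (n + 1) ≤ ∑ i ∈ range (n + 1), a (i + 1) * b (n - i)) (n : ℕ) :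
    b n ≤ b 0 * S ^ n * n ! := by
  induction n using Nat.strong_induction_on with
  | _ n ih =>
  cases n with
  | zero => simp
  | succ n =>
    set M := b 0 * S ^ (n + 1) * (n + 1)!
    have hb0 := hb 0
    have hterm : ∀ i ∈ range (n + 1), a (i + 1) * b (n - i) ≤ M * K * q ^ (i + 1) := by
      intro i hi
      have hi : i + 1 + (n - i) = n + 1 := by have := mem_range.1 hi; omega
      have hfac : ((i + 1)! * (n - i)! : ℝ) ≤ (n + 1)! := by
        have := Nat.factorial_mul_factorial_dvd_factorial_add (i + 1) (n - i)
        rw [hi] at this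
        exact_mod_cast Nat.le_of_dvd (Nat.factorial_pos _) this
      calc a (i + 1) * b (n - i)
          ≤ (K * (q * S) ^ (i + 1) * (i + 1)!) * (b 0 * S ^ (n - i) * (n - i)!) :=
            mul_le_mul (ha _) (ih _ (by omega)) (hb _) (by positivity)
        _ = b 0 * S ^ (i + 1 + (n - i)) * ((i + 1)! * (n - i)!) * K * q ^ (i + 1) := by ring
        _ ≤ M * K * q ^ (i + 1) := by
          rw [hi]; gcongr; exact mul_le_mul_of_nonneg_left hfac (by positivity)
    have hgeom : ∑ i ∈ range (n + 1), q ^ (i + 1) ≤ 2 * q := calc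
      ∑ i ∈ range (n + 1), q ^ (i + 1) = q * ∑ i ∈ range (n + 1), q ^ i := by
        rw [mul_sum]; simp only [pow_succ']
      _ ≤ q * ∑ i ∈ range (n + 1), (1 / 2 : ℝ) ^ i := by gcongr
      _ ≤ q * 2 := by gcongr; exact sum_geometric_two_le _
      _ = 2 * q := mul_comm _ _
    refine le_of_mul_le_mul_left ?_ hr
    calc r * b (n + 1) ≤ ∑ i ∈ range (n + 1), a (i + 1) * b (n - i) := hrec n
      _ ≤ ∑ i ∈ range (n + 1), M * K * q ^ (i + 1) := sum_le_sum hterm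
      _ = M * K * ∑ i ∈ range (n + 1), q ^ (i + 1) := by rw [mul_sum]
      _ ≤ M * K * (2 * q) := by gcongr
      _ = M * (2 * K * q) := by ring
      _ ≤ M * r := by gcongr
      _ = r * M := mul_comm _ _

lemma MemA.inv {u : PowerSeries ℂ} (hu : MemA u) (h0 : constantCoeff u ≠ 0) : MemA u⁻¹ := by
  obtain ⟨K, R, hK, hR, hbound⟩ := memA_iff_exists_norm_coeff_le.1 hu
  set r := ‖constantCoeff u‖
  have hr : 0 < r := norm_pos_iff.2 h0
  set q := r / (2 * (K + r))
  have hq : 0 < q := by positivity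
  have hq2 : q ≤ 1 / 2 := by
    rw [div_le_iff₀ (by positivity)]; linarith
  have hKq : 2 * K * q ≤ r := by
    rw [mul_div_assoc', div_le_iff₀ (by positivity)]; nlinarith
  have hrec := norm_constantCoeff_mul_norm_coeff_succ_le (PowerSeries.mul_inv_cancel u h0)
  refine memA_iff_exists_norm_coeff_le.2 ⟨‖coeff 0 u⁻¹‖, R / q, norm_nonneg _, by positivity,
    le_mul_pow_mul_factorial_of_mul_le_sum (a := fun i => ‖coeff i u‖) hK hq.le hq2 hKq hr
      (by positivity) (fun i => ?_) (fun n => norm_nonneg _) hrec⟩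
  rw [mul_div_cancel₀ _ hq.ne']
  exact hbound i

/-- Every nonzero `a ∈ A` can be written as `a = u t^ℓ` with `u` invertible in `A`
(i.e. `u ∈ A` and `u` has an inverse lying in `A`).  This is the key statement making
`A` a discrete valuation ring. -/
theorem stmt_4 (a : PowerSeries ℂ) (ha : MemA a) (hne : a ≠ 0) :
    ∃ (ℓ : ℕ) (u : PowerSeries ℂ), MemA u ∧
      (∃ v : PowerSeries ℂ, MemA v ∧ u * v = 1) ∧ a = u * X ^ ℓ := by
  obtain ⟨w, hw⟩ : X ^ a.order.toNat ∣ a := X_pow_order_dvd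
  have hw0 : constantCoeff w ≠ 0 := by
    rw [← coeff_zero_eq_constantCoeff_apply, ← coeff_X_pow_mul w a.order.toNat 0, zero_add, ← hw]
    exact coeff_order hne
  have hwA : MemA w := MemA.of_X_pow_mul _ (hw ▸ ha)
  exact ⟨_, w, hwA, ⟨w⁻¹, hwA.inv hw0, PowerSeries.mul_inv_cancel w hw0⟩, by rw [hw, mul_comm]⟩
end

section
/- Let F̂ be a t-torsion module over a ring R[[t]] (R commutative). Then Hom_{R[[t]]}(F̂, R((t))/R[[t]]) ≅ Hom_R(F̂, R), via sending a compatible family (f_k : F̂ → R·t^{−k})_{k≥1} with f_k ∘ t = t ∘ f_{k+1} to its first component f_1. -/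
open PowerSeries

/-- The image of `R[[t]]` inside the Laurent series `R((t))`, as a submodule over
`R[[t]]`. -/
noncomputable def powerSeriesSub (R : Type) [CommRing R] :
    Submodule (PowerSeries R) (LaurentSeries R) :=
  LinearMap.range (Algebra.linearMap (PowerSeries R) (LaurentSeries R))

/-! The residue `ρ : R((t))/R[[t]] → R`, `x ↦ coeff_{-1} x`, is nondegenerate for the
`R[[t]]`-action, since `coeff_{-(j+1)} x = ρ (t ^ j • x)`; hence an `R[[t]]`-linear map `φ` is
determined by `ρ ∘ φ`. Conversely, for `f : F → R` and `m` killed by `t ^ n`, the class of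
`∑_{k<n} f (t ^ k • m) t^{-(k+1)}` is the unique `y` with `ρ (q • y) = f (q • m)` for all
`q`, and this uniqueness makes `m ↦ y` automatically `R[[t]]`-linear. -/

section Coinduced

variable {R A Q F : Type*} [CommRing R] [Semiring A] [Algebra R A]
  [AddCommGroup Q] [Module A Q] [Module R Q] [IsScalarTower R A Q]
  [AddCommGroup F] [Module A F] [Module R F] [IsScalarTower R A F]

def compRestrictScalars (ρ : Q →ₗ[R] R) : (F →ₗ[A] Q) →+ (F →ₗ[R] R) :=
  AddMonoidHom.mk' (fun φ => ρ ∘ₗ φ.restrictScalars R) fun φ ψ => by ext; simp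

@[simp]
theorem compRestrictScalars_apply (ρ : Q →ₗ[R] R) (φ : F →ₗ[A] Q) (m : F) :
    compRestrictScalars ρ φ m = ρ (φ m) := rfl

variable {ρ : Q →ₗ[R] R}

theorem compRestrictScalars_injective (hρ : ∀ x : Q, (∀ a : A, ρ (a • x) = 0) → x = 0) :
    Function.Injective (compRestrictScalars (A := A) (F := F) ρ) := by
  refine (injective_iff_map_eq_zero _).2 fun φ hφ => LinearMap.ext fun m => hρ _ fun a => ?_
  rw [← map_smul, ← compRestrictScalars_apply, hφ, LinearMap.zero_apply]

theorem compRestrictScalars_surjective (hρ : ∀ x : Q, (∀ a : A, ρ (a • x) = 0) → x = 0)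
    (hrep : ∀ (f : F →ₗ[R] R) (m : F), ∃ x : Q, ∀ a : A, ρ (a • x) = f (a • m)) :
    Function.Surjective (compRestrictScalars (A := A) (F := F) ρ) := by
  intro f
  choose x hx using hrep f
  have eq_of_forall (y z : Q) (h : ∀ a : A, ρ (a • y) = ρ (a • z)) : y = z :=
    sub_eq_zero.1 <| hρ _ fun a => by rw [smul_sub, map_sub, h, sub_self]
  refine ⟨{ toFun := x, map_add' := fun m m' => ?_, map_smul' := fun b m => ?_ }, ?_⟩
  · exact eq_of_forall _ _ fun a => by simp only [hx, smul_add, map_add]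
  · exact eq_of_forall _ _ fun a => by rw [RingHom.id_apply, smul_smul, hx, hx, mul_smul]
  · ext m
    simpa using hx m 1

end Coinduced

theorem PowerSeries.map_eq_sum_coeff_smul_map_X_pow {R M : Type*} [CommRing R]
    [AddCommGroup M] [Module R M] (g : R⟦X⟧ →ₗ[R] M) {n : ℕ} (hg : ∀ q, g (X ^ n * q) = 0)
    (q : R⟦X⟧) :
    g q = ∑ k ∈ Finset.range n, coeff k q • g (X ^ k) := by
  have htrunc : (trunc n q : R⟦X⟧) = ∑ k ∈ Finset.range n, coeff k q • X ^ k := by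
    ext d
    simp [coeff_trunc, coeff_X_pow]
  conv_lhs => rw [eq_X_pow_mul_shift_add_trunc n q]
  simp only [map_add, hg, zero_add, htrunc, map_sum, map_smul]

namespace LaurentSeries

variable {R : Type} [CommRing R]

theorem powerSeries_smul_eq_mul (p : R⟦X⟧) (x : R⸨X⸩) :
    p • x = HahnSeries.ofPowerSeries ℤ R p * x := by
  rw [Algebra.smul_def, HahnSeries.algebraMap_apply', Algebra.algebraMap_self_apply]

instance : IsScalarTower R R⟦X⟧ R⸨X⸩ where
  smul_assoc r p x := by
    rw [powerSeries_smul_eq_mul, powerSeries_smul_eq_mul, smul_eq_C_mul, map_mul,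
      HahnSeries.ofPowerSeries_C, mul_assoc, HahnSeries.C_mul_eq_smul]

theorem mem_powerSeriesSub_iff {x : R⸨X⸩} :
    x ∈ powerSeriesSub R ↔ ∀ i < 0, x.coeff i = 0 := by
  constructor
  · rintro ⟨p, rfl⟩ i hi
    rw [Algebra.linearMap_apply, HahnSeries.algebraMap_apply', Algebra.algebraMap_self_apply,
      coeff_coe, if_pos hi]
  · intro h
    refine ⟨mk fun n => x.coeff n, HahnSeries.ext <| funext fun i => ?_⟩
    rw [Algebra.linearMap_apply, HahnSeries.algebraMap_apply', Algebra.algebraMap_self_apply,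
      coeff_coe]
    split_ifs with hi
    · exact (h i hi).symm
    · rw [coeff_mk, Int.natAbs_of_nonneg (not_lt.1 hi)]

noncomputable def residue : (R⸨X⸩ ⧸ powerSeriesSub R) →ₗ[R] R :=
  ((powerSeriesSub R).restrictScalars R).liftQ (HahnSeries.coeff.linearMap (-1))
      (fun _ hx => mem_powerSeriesSub_iff.1 hx (-1) (by norm_num)) ∘ₗ
    (Submodule.Quotient.restrictScalarsEquiv R (powerSeriesSub R)).symm.toLinearMap

@[simp]
theorem residue_mk (x : R⸨X⸩) :
    residue (Submodule.Quotient.mk x : R⸨X⸩ ⧸ powerSeriesSub R) = x.coeff (-1) := rfl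

theorem coeff_X_pow_smul_add (j : ℕ) (x : R⸨X⸩) (i : ℤ) :
    ((X ^ j : R⟦X⟧) • x).coeff (i + j) = x.coeff i := by
  rw [powerSeries_smul_eq_mul, HahnSeries.ofPowerSeries_X_pow, HahnSeries.coeff_single_mul_add,
    one_mul]

theorem eq_zero_of_forall_residue_smul_eq_zero (y : R⸨X⸩ ⧸ powerSeriesSub R)
    (h : ∀ q : R⟦X⟧, residue (q • y) = 0) : y = 0 := by
  induction y using Submodule.Quotient.induction_on with | _ x => ?_
  rw [Submodule.Quotient.mk_eq_zero, mem_powerSeriesSub_iff]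
  intro i hi
  obtain ⟨j, rfl⟩ : ∃ j : ℕ, i = -1 - j := ⟨(-1 - i).toNat, by omega⟩
  have hshift := coeff_X_pow_smul_add j x (-1 - j)
  rw [sub_add_cancel] at hshift
  rw [← hshift, ← residue_mk, Submodule.Quotient.mk_smul]
  exact h _

theorem exists_residue_smul_eq (g : R⟦X⟧ →ₗ[R] R) {n : ℕ}
    (hg : ∀ q, g (X ^ n * q) = 0) :
    ∃ y : R⸨X⸩ ⧸ powerSeriesSub R, ∀ q : R⟦X⟧, residue (q • y) = g q := by
  refine ⟨Submodule.Quotient.mk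
    (∑ k ∈ Finset.range n, HahnSeries.single (-(k + 1) : ℤ) (g (X ^ k))), fun q => ?_⟩
  rw [← Submodule.Quotient.mk_smul, residue_mk, powerSeries_smul_eq_mul, Finset.mul_sum,
    HahnSeries.coeff_sum, map_eq_sum_coeff_smul_map_X_pow g hg]
  refine Finset.sum_congr rfl fun k _ => ?_
  have hk : (-1 : ℤ) = k + (-(k + 1) : ℤ) := by ring
  rw [hk, HahnSeries.coeff_mul_single_add, coeff_coe_powerSeries, smul_eq_mul]

end LaurentSeries

/-- For a `t`-torsion module `F̂` over `R[[t]]`,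
`Hom_{R[[t]]}(F̂, R((t))/R[[t]]) ≅ Hom_R(F̂, R)`, via sending a homomorphism `φ`
to its first component `f_1 : m ↦ (coefficient of t⁻¹ of φ(m))`. -/
theorem stmt_10 (R : Type) [CommRing R]
    (F : Type) [AddCommGroup F] [Module R F] [Module (PowerSeries R) F]
    [IsScalarTower R (PowerSeries R) F]
    (htors : ∀ m : F, ∃ n : ℕ, (X ^ n : PowerSeries R) • m = 0) :
    ∃ e : (F →ₗ[PowerSeries R] (LaurentSeries R ⧸ powerSeriesSub R)) ≃+ (F →ₗ[R] R),
      ∀ (φ : F →ₗ[PowerSeries R] (LaurentSeries R ⧸ powerSeriesSub R)) (m : F)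
        (x : LaurentSeries R), Submodule.Quotient.mk x = φ m →
          (e φ) m = x.coeff (-1 : ℤ) := by
  have hnondeg := LaurentSeries.eq_zero_of_forall_residue_smul_eq_zero (R := R)
  have hrep (f : F →ₗ[R] R) (m : F) :
      ∃ y, ∀ q : R⟦X⟧, LaurentSeries.residue (q • y) = f (q • m) := by
    obtain ⟨n, hn⟩ := htors m
    refine LaurentSeries.exists_residue_smul_eq
      (f ∘ₗ (LinearMap.toSpanSingleton R⟦X⟧ F m).restrictScalars R) (n := n) fun q => ?_
    simp [mul_comm, mul_smul, hn]
  refine ⟨AddEquiv.ofBijective _ ⟨compRestrictScalars_injective hnondeg,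
    compRestrictScalars_surjective hnondeg hrep⟩, fun φ m x hx => ?_⟩
  change LaurentSeries.residue (φ m) = _
  rw [← hx, LaurentSeries.residue_mk]
end

section
/- Let f = b⁺ + b⁻ + a⁻ where, on the torus-type region K = {r ≤ |z_1| ≤ R, r ≤ |z_2| ≤ R} ⊂ ℂ² with R/r ≥ 16: a⁻ is holomorphic on {r ≤ |z_1| ≤ R, |z_2| ≤ R} with only negative powers of z_1 in its Laurent expansion, b⁻ is holomorphic on {|z_1| ≤ R, r ≤ |z_2| ≤ R} with only negative powers of z_2, and b⁺ is holomorphic on the full polydisc {|z_1| ≤ R, |z_2| ≤ R}. Then ‖b⁺‖_K ≤ 8‖f‖_K, ‖b⁻‖_K ≤ 8‖f‖_K, and ‖a⁻‖_K ≤ 8‖f‖_K, where ‖·‖_K is the sup norm on K. -/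
/-!
On the torus `|z₁| = |z₂| = R` the Schwarz lemma at infinity (in `z₁` for `a⁻`, in `z₂` for `b⁻`)
makes `a⁻` and `b⁻` at most `r/R` times their sup over `K`, so `b⁺ = f - b⁻ - a⁻` is bounded
there, hence on `K` by the maximum principle in each variable. Similarly `a⁻ = f - b⁺ - b⁻` is
bounded on `|z₁| = r, |z₂| = R`, and this spreads to `K` by the Schwarz lemma at infinity in `z₁`
and the maximum principle in `z₂`; `b⁻` is symmetric. With `q = r/R ≤ 1/16` the linear system
`P ≤ F + q(A + B)`, `A ≤ F + P + qB`, `B ≤ F + P + qA` for the sup norms gives the factor `8`.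
-/

open Filter Bornology

/-- The torus-type region `K = {r ≤ |z₁| ≤ R, r ≤ |z₂| ≤ R} ⊆ ℂ²`. -/
def Kset (r R : ℝ) : Set (ℂ × ℂ) :=
  {z : ℂ × ℂ | r ≤ ‖z.1‖ ∧ ‖z.1‖ ≤ R ∧ r ≤ ‖z.2‖ ∧ ‖z.2‖ ≤ R}

/-- The sup norm `‖h‖_K` over the region `K`. -/
noncomputable def supK (r R : ℝ) (h : ℂ × ℂ → ℂ) : ℝ :=
  ⨆ z : Kset r R, ‖h z.val‖

open Metric Function Topology Set

section OneVariable

variable {F : Type*} [NormedAddCommGroup F] [NormedSpace ℂ F]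

theorem Complex.norm_le_of_forall_mem_sphere_norm_le {f : ℂ → F} {c : ℂ} {R C : ℝ} (hR : 0 < R)
    (hd : DifferentiableOn ℂ f (closedBall c R)) (hC : ∀ z ∈ sphere c R, ‖f z‖ ≤ C)
    {z : ℂ} (hz : z ∈ closedBall c R) : ‖f z‖ ≤ C :=
  Complex.norm_le_of_forall_mem_frontier_norm_le isBounded_ball (hd.diffContOnCl_ball subset_rfl)
    (by rwa [frontier_ball c hR.ne']) (by rwa [closure_ball c hR.ne'])

/-- Schwarz lemma on a closed disc: the maximum principle applied to `dslope g 0`. -/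
theorem Complex.norm_le_div_mul_norm_of_forall_mem_sphere [CompleteSpace F] {g : ℂ → F}
    {ρ C : ℝ} (hρ : 0 < ρ) (hd : DifferentiableOn ℂ g (closedBall 0 ρ)) (h0 : g 0 = 0)
    (hC : ∀ u ∈ sphere (0 : ℂ) ρ, ‖g u‖ ≤ C) {u : ℂ} (hu : u ∈ closedBall (0 : ℂ) ρ) :
    ‖g u‖ ≤ C / ρ * ‖u‖ := by
  have hslope : ‖dslope g 0 u‖ ≤ C / ρ := by
    refine Complex.norm_le_of_forall_mem_sphere_norm_le hρ
      ((Complex.differentiableOn_dslope (closedBall_mem_nhds 0 hρ)).2 hd) (fun w hw => ?_) hu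
    have hw0 : w ≠ 0 := ne_zero_of_mem_sphere hρ.ne' ⟨w, hw⟩
    rw [dslope_of_ne _ hw0, slope_def_module, h0, sub_zero, sub_zero, norm_smul, norm_inv,
      mem_sphere_zero_iff_norm.1 hw, inv_mul_eq_div]
    exact div_le_div_of_nonneg_right (hC w hw) hρ.le
  have hg : g u = u • dslope g 0 u := by simpa [h0] using (sub_smul_dslope g 0 u).symm
  rw [hg, norm_smul, mul_comm]
  exact mul_le_mul_of_nonneg_right hslope (norm_nonneg u)

/-- Schwarz lemma at infinity, through the chart `u ↦ g u⁻¹`, extended by `0` at `u = 0`. -/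
theorem Complex.norm_le_div_mul_of_tendsto_cobounded [CompleteSpace F] {g : ℂ → F} {r C : ℝ}
    (hr : 0 < r) (hd : DifferentiableOn ℂ g {w | r ≤ ‖w‖}) (hg : Tendsto g (cobounded ℂ) (𝓝 0))
    (hC : ∀ w, ‖w‖ = r → ‖g w‖ ≤ C) {w : ℂ} (hw : r ≤ ‖w‖) : ‖g w‖ ≤ r / ‖w‖ * C := by
  have hρ : 0 < r⁻¹ := inv_pos.2 hr
  have hmaps : MapsTo Inv.inv (closedBall (0 : ℂ) r⁻¹ \ {0}) {w | r ≤ ‖w‖} := fun u hu => by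
    have hu0 : 0 < ‖u‖ := norm_pos_iff.2 hu.2
    simpa [norm_inv] using le_inv_of_le_inv₀ hu0 (mem_closedBall_zero_iff.1 hu.1)
  set G : ℂ → F := update (fun u => g u⁻¹) 0 0
  have hG : DifferentiableOn ℂ G (closedBall 0 r⁻¹) := by
    rw [← Complex.differentiableOn_compl_singleton_and_continuousAt_iff
      (closedBall_mem_nhds 0 hρ)]
    exact ⟨(hd.comp (differentiableOn_inv.mono fun u hu => hu.2) hmaps).congr
        fun u hu => update_of_ne hu.2 _ _,
      continuousAt_update_same.2 (hg.comp tendsto_inv₀_nhdsNE_zero)⟩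
  have hw0 : w ≠ 0 := norm_pos_iff.1 (hr.trans_le hw)
  have hGw : G w⁻¹ = g w := by simp [G, hw0]
  have hsphere : ∀ u ∈ sphere (0 : ℂ) r⁻¹, ‖G u‖ ≤ C := fun u hu => by
    have hu0 : u ≠ 0 := ne_zero_of_mem_sphere hρ.ne' ⟨u, hu⟩
    simpa [G, hu0] using hC u⁻¹ (by simp [norm_inv, mem_sphere_zero_iff_norm.1 hu])
  have hmem : w⁻¹ ∈ closedBall (0 : ℂ) r⁻¹ := by simpa [norm_inv] using inv_anti₀ hr hw
  have hbound := Complex.norm_le_div_mul_norm_of_forall_mem_sphere hρ hG (update_self _ _ _)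
    hsphere hmem
  rw [hGw, norm_inv, div_inv_eq_mul] at hbound
  calc ‖g w‖ ≤ C * r * ‖w‖⁻¹ := hbound
  _ = r / ‖w‖ * C := by ring

end OneVariable

section Region

variable {r R : ℝ}

theorem isCompact_Kset : IsCompact (Kset r R) := by
  refine (isCompact_closedBall (0 : ℂ × ℂ) R).of_isClosed_subset ?_
    fun z hz => mem_closedBall_zero_iff.2 (max_le hz.2.1 hz.2.2.2)
  have h₁ : Continuous fun z : ℂ × ℂ => ‖z.1‖ := continuous_fst.norm
  have h₂ : Continuous fun z : ℂ × ℂ => ‖z.2‖ := continuous_snd.norm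
  exact (isClosed_le continuous_const h₁).inter ((isClosed_le h₁ continuous_const).inter
    ((isClosed_le continuous_const h₂).inter (isClosed_le h₂ continuous_const)))

theorem Kset_nonempty (hr : 0 ≤ r) (hrR : r ≤ R) : (Kset r R).Nonempty := by
  have h : ‖(r : ℂ)‖ = r := Complex.norm_of_nonneg hr
  exact ⟨(r, r), h.ge, h.le.trans hrR, h.ge, h.le.trans hrR⟩

theorem swap_mem_Kset_iff {z : ℂ × ℂ} : z.swap ∈ Kset r R ↔ z ∈ Kset r R :=
  ⟨fun ⟨h₁, h₂, h₃, h₄⟩ => ⟨h₃, h₄, h₁, h₂⟩, fun ⟨h₁, h₂, h₃, h₄⟩ => ⟨h₃, h₄, h₁, h₂⟩⟩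

theorem supK_nonneg (h : ℂ × ℂ → ℂ) : 0 ≤ supK r R h :=
  Real.iSup_nonneg fun _ => norm_nonneg _

theorem norm_le_supK {h : ℂ × ℂ → ℂ} (hc : ContinuousOn h (Kset r R)) {z : ℂ × ℂ}
    (hz : z ∈ Kset r R) : ‖h z‖ ≤ supK r R h := by
  have hb := (isCompact_Kset.image_of_continuousOn hc.norm).bddAbove
  rw [image_eq_range] at hb
  exact le_ciSup hb (⟨z, hz⟩ : Kset r R)

theorem supK_le {h : ℂ × ℂ → ℂ} {C : ℝ} (hne : (Kset r R).Nonempty)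
    (hC : ∀ z ∈ Kset r R, ‖h z‖ ≤ C) : supK r R h ≤ C :=
  have := hne.to_subtype
  ciSup_le fun z => hC z z.2

theorem supK_comp_swap (h : ℂ × ℂ → ℂ) : supK r R (h ∘ Prod.swap) = supK r R h :=
  ((Equiv.prodComm ℂ ℂ).subtypeEquiv fun _ => swap_mem_Kset_iff.symm).iSup_comp
    (g := fun z : Kset r R => ‖h z‖)

end Region

/-- A function with only negative powers of `z₁` in its Laurent expansion on
`{r ≤ |z₁|, |z₂| ≤ R}`, encoded by holomorphy there and decay as `z₁ → ∞`. -/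
structure OnlyNegPowersFst (r R : ℝ) (a : ℂ × ℂ → ℂ) : Prop where
  differentiableOn : DifferentiableOn ℂ a {z : ℂ × ℂ | r ≤ ‖z.1‖ ∧ ‖z.2‖ ≤ R}
  tendsto_cobounded : ∀ z₂ : ℂ, ‖z₂‖ ≤ R → Tendsto (fun w => a (w, z₂)) (cobounded ℂ) (𝓝 0)

namespace OnlyNegPowersFst

variable {r R C : ℝ} {a : ℂ × ℂ → ℂ}

theorem continuousOn_Kset (ha : OnlyNegPowersFst r R a) : ContinuousOn a (Kset r R) :=
  ha.differentiableOn.continuousOn.mono fun _ hz => ⟨hz.1, hz.2.2.2⟩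

theorem norm_le_div_mul (ha : OnlyNegPowersFst r R a) (hr : 0 < r) {z₂ : ℂ} (hz₂ : ‖z₂‖ ≤ R)
    (hC : ∀ w : ℂ, ‖w‖ = r → ‖a (w, z₂)‖ ≤ C) {w : ℂ} (hw : r ≤ ‖w‖) :
    ‖a (w, z₂)‖ ≤ r / ‖w‖ * C :=
  Complex.norm_le_div_mul_of_tendsto_cobounded hr
    (ha.differentiableOn.comp (differentiableOn_id.prodMk (differentiableOn_const z₂))
      fun _ hv => ⟨hv, hz₂⟩)
    (ha.tendsto_cobounded z₂ hz₂) hC hw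

theorem norm_le_div_mul_supK (ha : OnlyNegPowersFst r R a) (hr : 0 < r) (hrR : r ≤ R)
    {z₁ z₂ : ℂ} (hz₁ : r ≤ ‖z₁‖) (hz₂ : r ≤ ‖z₂‖) (hz₂' : ‖z₂‖ ≤ R) :
    ‖a (z₁, z₂)‖ ≤ r / ‖z₁‖ * supK r R a :=
  ha.norm_le_div_mul hr hz₂'
    (fun _ hw => norm_le_supK ha.continuousOn_Kset ⟨hw.ge, hw.le.trans hrR, hz₂, hz₂'⟩) hz₁

/-- Schwarz lemma at infinity in `z₁`, then the maximum principle in `z₂`. -/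
theorem norm_le_of_forall_torus (ha : OnlyNegPowersFst r R a) (hr : 0 < r) (hR : 0 < R)
    (hC : ∀ z₁ z₂ : ℂ, ‖z₁‖ = r → ‖z₂‖ = R → ‖a (z₁, z₂)‖ ≤ C) {z : ℂ × ℂ}
    (hz₁ : r ≤ ‖z.1‖) (hz₂ : ‖z.2‖ ≤ R) : ‖a z‖ ≤ C := by
  have hC₀ : 0 ≤ C := (norm_nonneg _).trans
    (hC r R (Complex.norm_of_nonneg hr.le) (Complex.norm_of_nonneg hR.le))
  refine Complex.norm_le_of_forall_mem_sphere_norm_le (f := fun w => a (z.1, w)) hR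
    (ha.differentiableOn.comp ((differentiableOn_const z.1).prodMk differentiableOn_id)
      fun _ hw => ⟨hz₁, mem_closedBall_zero_iff.1 hw⟩)
    (fun w hw => ?_) (mem_closedBall_zero_iff.2 hz₂)
  have hw : ‖w‖ = R := mem_sphere_zero_iff_norm.1 hw
  calc ‖a (z.1, w)‖ ≤ r / ‖z.1‖ * C :=
        ha.norm_le_div_mul hr hw.le (fun v hv => hC v w hv hw) hz₁
    _ ≤ 1 * C := by gcongr; exact div_le_one_of_le₀ hz₁ (norm_nonneg _)
    _ = C := one_mul C

end OnlyNegPowersFst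

theorem norm_le_of_forall_torus_of_differentiableOn_polydisc {R C : ℝ} {p : ℂ × ℂ → ℂ}
    (hR : 0 < R) (hp : DifferentiableOn ℂ p {z : ℂ × ℂ | ‖z.1‖ ≤ R ∧ ‖z.2‖ ≤ R})
    (hC : ∀ z₁ z₂ : ℂ, ‖z₁‖ = R → ‖z₂‖ = R → ‖p (z₁, z₂)‖ ≤ C) {z : ℂ × ℂ}
    (hz₁ : ‖z.1‖ ≤ R) (hz₂ : ‖z.2‖ ≤ R) : ‖p z‖ ≤ C := by
  have hslice : ∀ z₂ : ℂ, ‖z₂‖ = R → ∀ z₁ : ℂ, ‖z₁‖ ≤ R → ‖p (z₁, z₂)‖ ≤ C :=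
    fun z₂ hz₂ z₁ hz₁ => Complex.norm_le_of_forall_mem_sphere_norm_le (f := fun w => p (w, z₂)) hR
      (hp.comp (differentiableOn_id.prodMk (differentiableOn_const z₂))
        fun _ hw => ⟨mem_closedBall_zero_iff.1 hw, hz₂.le⟩)
      (fun w hw => hC w z₂ (mem_sphere_zero_iff_norm.1 hw) hz₂) (mem_closedBall_zero_iff.2 hz₁)
  exact Complex.norm_le_of_forall_mem_sphere_norm_le (f := fun w => p (z.1, w)) hR
    (hp.comp ((differentiableOn_const z.1).prodMk differentiableOn_id)
      fun _ hw => ⟨hz₁, mem_closedBall_zero_iff.1 hw⟩)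
    (fun w hw => hslice w (mem_sphere_zero_iff_norm.1 hw) z.1 hz₁) (mem_closedBall_zero_iff.2 hz₂)

structure IsCousinDecomposition (r R : ℝ) (f p b a : ℂ × ℂ → ℂ) : Prop where
  negPowersFst : OnlyNegPowersFst r R a
  negPowersSnd : OnlyNegPowersFst r R (b ∘ Prod.swap)
  differentiableOn_polydisc : DifferentiableOn ℂ p {z : ℂ × ℂ | ‖z.1‖ ≤ R ∧ ‖z.2‖ ≤ R}
  eq_add : ∀ z, f z = p z + b z + a z

namespace IsCousinDecomposition

variable {r R : ℝ} {f p b a : ℂ × ℂ → ℂ}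

theorem swap (h : IsCousinDecomposition r R f p b a) :
    IsCousinDecomposition r R (f ∘ Prod.swap) (p ∘ Prod.swap) (a ∘ Prod.swap) (b ∘ Prod.swap) where
  negPowersFst := h.negPowersSnd
  negPowersSnd := h.negPowersFst
  differentiableOn_polydisc := h.differentiableOn_polydisc.comp
    (differentiableOn_snd.prodMk differentiableOn_fst) fun _ hz => ⟨hz.2, hz.1⟩
  eq_add z := by simp only [comp_apply, h.eq_add]; ring

theorem continuousOn_Kset_snd (h : IsCousinDecomposition r R f p b a) :
    ContinuousOn b (Kset r R) :=
  h.negPowersSnd.continuousOn_Kset.comp continuous_swap.continuousOn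
    fun _ hz => swap_mem_Kset_iff.2 hz

theorem continuousOn_Kset (h : IsCousinDecomposition r R f p b a) : ContinuousOn f (Kset r R) :=
  (((h.differentiableOn_polydisc.continuousOn.mono fun _ hz => ⟨hz.2.1, hz.2.2.2⟩).add
    h.continuousOn_Kset_snd).add h.negPowersFst.continuousOn_Kset).congr fun z _ => h.eq_add z

theorem norm_snd_le_div_mul_supK (h : IsCousinDecomposition r R f p b a) (hr : 0 < r)
    (hrR : r ≤ R) {z₁ z₂ : ℂ} (hz₁ : r ≤ ‖z₁‖) (hz₁' : ‖z₁‖ ≤ R) (hz₂ : r ≤ ‖z₂‖) :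
    ‖b (z₁, z₂)‖ ≤ r / ‖z₂‖ * supK r R b := by
  simpa [supK_comp_swap] using h.negPowersSnd.norm_le_div_mul_supK hr hrR hz₂ hz₁ hz₁'

theorem supK_pos_part_le (h : IsCousinDecomposition r R f p b a) (hr : 0 < r) (hrR : r ≤ R) :
    supK r R p ≤ supK r R f + r / R * supK r R b + r / R * supK r R a := by
  have hR : 0 < R := hr.trans_le hrR
  refine supK_le (Kset_nonempty hr.le hrR) fun z hz =>
    norm_le_of_forall_torus_of_differentiableOn_polydisc hR h.differentiableOn_polydisc
      (fun z₁ z₂ h₁ h₂ => ?_) hz.2.1 hz.2.2.2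
  have hmem : (z₁, z₂) ∈ Kset r R := ⟨hrR.trans h₁.ge, h₁.le, hrR.trans h₂.ge, h₂.le⟩
  calc ‖p (z₁, z₂)‖ = ‖f (z₁, z₂) - b (z₁, z₂) - a (z₁, z₂)‖ := by rw [h.eq_add]; ring_nf
    _ ≤ ‖f (z₁, z₂)‖ + ‖b (z₁, z₂)‖ + ‖a (z₁, z₂)‖ :=
      (norm_sub_le _ _).trans (add_le_add_left (norm_sub_le _ _) _)
    _ ≤ supK r R f + r / R * supK r R b + r / R * supK r R a := by
      gcongr
      · exact norm_le_supK h.continuousOn_Kset hmem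
      · exact h₂ ▸ h.norm_snd_le_div_mul_supK hr hrR hmem.1 h₁.le hmem.2.2.1
      · exact h₁ ▸ h.negPowersFst.norm_le_div_mul_supK hr hrR hmem.1 hmem.2.2.1 h₂.le

theorem supK_neg_fst_part_le (h : IsCousinDecomposition r R f p b a) (hr : 0 < r)
    (hrR : r ≤ R) : supK r R a ≤ supK r R f + supK r R p + r / R * supK r R b := by
  refine supK_le (Kset_nonempty hr.le hrR) fun z hz =>
    h.negPowersFst.norm_le_of_forall_torus hr (hr.trans_le hrR) (fun z₁ z₂ h₁ h₂ => ?_)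
      hz.1 hz.2.2.2
  have hmem : (z₁, z₂) ∈ Kset r R := ⟨h₁.ge, h₁.le.trans hrR, hrR.trans h₂.ge, h₂.le⟩
  calc ‖a (z₁, z₂)‖ = ‖f (z₁, z₂) - p (z₁, z₂) - b (z₁, z₂)‖ := by rw [h.eq_add]; ring_nf
    _ ≤ ‖f (z₁, z₂)‖ + ‖p (z₁, z₂)‖ + ‖b (z₁, z₂)‖ :=
      (norm_sub_le _ _).trans (add_le_add_left (norm_sub_le _ _) _)
    _ ≤ supK r R f + supK r R p + r / R * supK r R b := by
      gcongr
      · exact norm_le_supK h.continuousOn_Kset hmem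
      · exact norm_le_supK (h.differentiableOn_polydisc.continuousOn.mono
          fun _ hz => ⟨hz.2.1, hz.2.2.2⟩) hmem
      · exact h₂ ▸ h.norm_snd_le_div_mul_supK hr hrR hmem.1 hmem.2.1 hmem.2.2.1

end IsCousinDecomposition

/-- Cousin-type estimate.  Let `f = b⁺ + b⁻ + a⁻` on `K`, with `R/r ≥ 16`, where:
`a⁻` is holomorphic on `{r ≤ |z₁|, |z₂| ≤ R}` with only negative powers of `z₁`
(encoded by holomorphy for `|z₁| ≥ r` and decay `a⁻ → 0` as `z₁ → ∞`);
`b⁻` is holomorphic on `{|z₁| ≤ R, r ≤ |z₂|}` with only negative powers of `z₂`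
(encoded analogously); and `b⁺` is holomorphic on the polydisc
`{|z₁| ≤ R, |z₂| ≤ R}`.  Then `‖b⁺‖_K, ‖b⁻‖_K, ‖a⁻‖_K ≤ 8 ‖f‖_K`. -/
theorem stmt_14 (r R : ℝ) (hr : 0 < r) (hRr : 16 * r ≤ R)
    (aminus bminus bplus f : ℂ × ℂ → ℂ)
    (ham : DifferentiableOn ℂ aminus {z : ℂ × ℂ | r ≤ ‖z.1‖ ∧ ‖z.2‖ ≤ R})
    (hamdecay : ∀ z2 : ℂ, ‖z2‖ ≤ R →
      Tendsto (fun w : ℂ => aminus (w, z2)) (cobounded ℂ) (nhds 0))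
    (hbm : DifferentiableOn ℂ bminus {z : ℂ × ℂ | ‖z.1‖ ≤ R ∧ r ≤ ‖z.2‖})
    (hbmdecay : ∀ z1 : ℂ, ‖z1‖ ≤ R →
      Tendsto (fun w : ℂ => bminus (z1, w)) (cobounded ℂ) (nhds 0))
    (hbp : DifferentiableOn ℂ bplus {z : ℂ × ℂ | ‖z.1‖ ≤ R ∧ ‖z.2‖ ≤ R})
    (hf : ∀ z : ℂ × ℂ, f z = bplus z + bminus z + aminus z) :
    supK r R bplus ≤ 8 * supK r R f ∧
    supK r R bminus ≤ 8 * supK r R f ∧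
    supK r R aminus ≤ 8 * supK r R f := by
  have hrR : r ≤ R := by linarith
  have hD : IsCousinDecomposition r R f bplus bminus aminus :=
    ⟨⟨ham, hamdecay⟩,
      ⟨hbm.comp (differentiableOn_snd.prodMk differentiableOn_fst) fun _ hz => ⟨hz.2, hz.1⟩,
        hbmdecay⟩, hbp, hf⟩
  have hP := hD.supK_pos_part_le hr hrR
  have hA := hD.supK_neg_fst_part_le hr hrR
  have hB := hD.swap.supK_neg_fst_part_le hr hrR
  simp only [supK_comp_swap] at hB
  have hq : r / R ≤ 1 / 16 := by
    rw [div_le_div_iff₀ (hr.trans_le hrR) (by norm_num)]; linarith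
  have hqA := mul_le_mul_of_nonneg_right hq (supK_nonneg (r := r) (R := R) aminus)
  have hqB := mul_le_mul_of_nonneg_right hq (supK_nonneg (r := r) (R := R) bminus)
  have := supK_nonneg (r := r) (R := R) f
  refine ⟨?_, ?_, ?_⟩ <;> linarith
end
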